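/- arXiv:2011.11832 — 4 statements merged into one kernel-verified Lean document; each statement's English description precedes it below -/
import Mathlib

section
/- Let d ≥ 1, let V and W be unitary operators on ℂ^d, let {χ_i}_{i=0}^{d-1} be an orthonormal basis of ℂ^d, and let ψ ∈ ℂ^d be a unit vector. Then the sum of the tester entropies satisfies H(V) + H(W) ≥ −log( max_{i,j} |⟨χ_i, W V* χ_j⟩|² ), where the maximum is over all pairs of indices i, j. -/
/-
Maassen–Uffink via Riesz–Thorin. Let `M` be the matrix `⟪χ i, W V* χ j⟫`: it is unitary on `ℓ²`
and maps `ℓ¹` to `ℓ^∞` with norm `c = max |M i j|`. Complex interpolation (Hadamard's three lines)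
gives `‖M α‖_q ≤ c ^ t ‖α‖_p` for `p = 2 / (1 + t)`, `q = 2 / (1 - t)`, `0 ≤ t < 1`. At `t = 0`
both sides equal `1` for a unit vector `α`; comparing the derivatives of their logarithms at
`t = 0⁺` turns the inequality into `H(|α|²) + H(|M α|²) ≥ -2 log c`.
-/

open scoped ComplexInnerProductSpace Matrix

noncomputable section

/-- Action of a `d × d` complex matrix on a vector of `ℂ^d`. -/
def act {d : ℕ} (U : Matrix (Fin d) (Fin d) ℂ) (ψ : EuclideanSpace ℂ (Fin d)) :
    EuclideanSpace ℂ (Fin d) :=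
  Matrix.toEuclideanLin U ψ

/-- Tester entropy: Shannon entropy of the outcome distribution
`p i = |⟨χ i, U ψ⟩|²` (natural logarithm, with `0 log 0 = 0`). -/
def tEnt {d : ℕ} (χ : OrthonormalBasis (Fin d) ℂ (EuclideanSpace ℂ (Fin d)))
    (U : Matrix (Fin d) (Fin d) ℂ) (ψ : EuclideanSpace ℂ (Fin d)) : ℝ :=
  ∑ i, Real.negMulLog (‖⟪χ i, act U ψ⟫‖ ^ 2)

open Finset Matrix

section

variable {ι κ : Type*}

/-- The analytic family of the Riesz–Thorin argument, of modulus
`‖a i‖ ^ ((1 + re z) / (1 + t))`: it carries the unit sphere of `ℓ^(2 / (1 + t))` to the unit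
sphere of `ℓ²` on `re z = 0` and to that of `ℓ¹` on `re z = 1`. -/
def interpolant (t : ℝ) (a : ι → ℂ) (z : ℂ) (i : ι) : ℂ :=
  a i * (‖a i‖ : ℂ) ^ ((z - t) / (1 + t))

lemma interpolant_self (t : ℝ) (a : ι → ℂ) : interpolant t a t = a := by
  ext i
  simp [interpolant]

lemma norm_interpolant {t : ℝ} (ht : -1 < t) (a : ι → ℂ) {z : ℂ} (hz : -1 < z.re) (i : ι) :
    ‖interpolant t a z i‖ = ‖a i‖ ^ ((1 + z.re) / (1 + t)) := by
  have ht' : 0 < 1 + t := by linarith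
  have hpos : 0 < (1 + z.re) / (1 + t) := div_pos (by linarith) ht'
  have hexp : 1 + (z.re - t) / (1 + t) = (1 + z.re) / (1 + t) := by field_simp; ring
  rcases eq_or_ne (a i) 0 with h | h
  · simp [interpolant, h, Real.zero_rpow hpos.ne']
  · have hre : ((z - t) / (1 + t)).re = (z.re - t) / (1 + t) := by
      rw [show (1 + t : ℂ) = ((1 + t : ℝ) : ℂ) by push_cast; rfl, Complex.div_ofReal_re]
      simp
    rw [interpolant, norm_mul, Complex.norm_cpow_eq_rpow_re_of_pos (norm_pos_iff.mpr h), hre,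
      ← Real.rpow_one_add' (norm_nonneg _) (hexp ▸ hpos.ne'), hexp]

lemma differentiable_interpolant (t : ℝ) (a : ι → ℂ) (i : ι) :
    Differentiable ℂ fun z ↦ interpolant t a z i := by
  rcases eq_or_ne (a i) 0 with h | h
  · simp [interpolant, h]
  · exact (differentiable_const _).mul <| ((differentiable_id.sub_const _).div_const _).const_cpow
      (.inl (Complex.ofReal_ne_zero.mpr (norm_ne_zero_iff.mpr h)))

lemma norm_interpolant_le_one {t : ℝ} (ht : -1 < t) {a : ι → ℂ} {i : ι} (ha : ‖a i‖ ≤ 1) {z : ℂ}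
    (hz : 0 ≤ z.re) : ‖interpolant t a z i‖ ≤ 1 := by
  rw [norm_interpolant ht a (by linarith) i]
  exact Real.rpow_le_one (norm_nonneg _) ha (div_nonneg (by linarith) (by linarith))

variable [Fintype ι] [Fintype κ]

lemma norm_le_one_of_sum_rpow_eq_one {p : ℝ} (hp : 0 < p) {a : ι → ℂ}
    (ha : ∑ i, ‖a i‖ ^ p = 1) (i : ι) : ‖a i‖ ≤ 1 := by
  by_contra! h
  have := single_le_sum (fun j _ ↦ Real.rpow_nonneg (norm_nonneg (a j)) p) (mem_univ i)
  linarith [Real.one_lt_rpow h hp]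

lemma sum_norm_interpolant_sq {t : ℝ} (ht : -1 < t) (a : ι → ℂ) {z : ℂ} (hz : z.re = 0) :
    ∑ i, ‖interpolant t a z i‖ ^ 2 = ∑ i, ‖a i‖ ^ (2 / (1 + t)) := by
  refine sum_congr rfl fun i _ ↦ ?_
  rw [norm_interpolant ht a (by linarith) i, hz, ← Real.rpow_mul_natCast (norm_nonneg _)]
  congr 1
  ring

lemma sum_norm_interpolant {t : ℝ} (ht : -1 < t) (a : ι → ℂ) {z : ℂ} (hz : z.re = 1) :
    ∑ i, ‖interpolant t a z i‖ = ∑ i, ‖a i‖ ^ (2 / (1 + t)) := by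
  refine sum_congr rfl fun i _ ↦ ?_
  rw [norm_interpolant ht a (by linarith) i, hz, one_add_one_eq_two]

lemma sum_norm_interpolant_le_card {t : ℝ} (ht : -1 < t) {a : ι → ℂ} (ha : ∀ i, ‖a i‖ ≤ 1)
    {z : ℂ} (hz : 0 ≤ z.re) : ∑ i, ‖interpolant t a z i‖ ≤ Fintype.card ι := by
  calc ∑ i, ‖interpolant t a z i‖ ≤ ∑ _i : ι, (1 : ℝ) :=
        sum_le_sum fun i _ ↦ norm_interpolant_le_one ht (ha i) hz
    _ = Fintype.card ι := by simp

lemma sum_norm_sq_mulVec [DecidableEq ι] {M : Matrix κ ι ℂ} (hM : Mᴴ * M = 1) (w : ι → ℂ) :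
    ∑ j, ‖(M *ᵥ w) j‖ ^ 2 = ∑ i, ‖w i‖ ^ 2 := by
  have key : star (M *ᵥ w) ⬝ᵥ (M *ᵥ w) = star w ⬝ᵥ w := by
    rw [star_mulVec, dotProduct_mulVec, vecMul_vecMul, hM, vecMul_one]
  simpa [dotProduct, Complex.re_sum, ← Complex.normSq_eq_norm_sq, Complex.normSq_apply]
    using congrArg Complex.re key

lemma norm_sum_mul_mulVec_le_mul_sum_mul_sum {M : Matrix κ ι ℂ} {c : ℝ} (hc : ∀ j i, ‖M j i‖ ≤ c)
    (v : κ → ℂ) (w : ι → ℂ) :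
    ‖∑ j, v j * (M *ᵥ w) j‖ ≤ c * (∑ j, ‖v j‖) * ∑ i, ‖w i‖ := by
  calc ‖∑ j, v j * (M *ᵥ w) j‖ ≤ ∑ j, ∑ i, ‖v j‖ * (c * ‖w i‖) := by
        refine (norm_sum_le _ _).trans (sum_le_sum fun j _ ↦ ?_)
        rw [norm_mul, ← mul_sum]
        refine mul_le_mul_of_nonneg_left ((norm_sum_le _ _).trans (sum_le_sum fun i _ ↦ ?_))
          (norm_nonneg _)
        rw [norm_mul]
        exact mul_le_mul_of_nonneg_right (hc j i) (norm_nonneg _)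
    _ = c * (∑ j, ‖v j‖) * ∑ i, ‖w i‖ := by
        simp only [← mul_sum, ← sum_mul]
        ring

lemma norm_sum_mul_mulVec_le_sqrt_mul_sqrt [DecidableEq ι] {M : Matrix κ ι ℂ} (hM : Mᴴ * M = 1)
    (v : κ → ℂ) (w : ι → ℂ) :
    ‖∑ j, v j * (M *ᵥ w) j‖ ≤ √(∑ j, ‖v j‖ ^ 2) * √(∑ i, ‖w i‖ ^ 2) := by
  calc ‖∑ j, v j * (M *ᵥ w) j‖ ≤ ∑ j, ‖v j‖ * ‖(M *ᵥ w) j‖ :=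
        (norm_sum_le _ _).trans_eq (by simp only [norm_mul])
    _ ≤ √(∑ j, ‖v j‖ ^ 2) * √(∑ j, ‖(M *ᵥ w) j‖ ^ 2) := Real.sum_mul_le_sqrt_mul_sqrt _ _ _
    _ = √(∑ j, ‖v j‖ ^ 2) * √(∑ i, ‖w i‖ ^ 2) := by rw [sum_norm_sq_mulVec hM]

open Complex.HadamardThreeLines in
theorem norm_sum_mul_mulVec_le_rpow [DecidableEq ι] {M : Matrix κ ι ℂ} (hM : Mᴴ * M = 1) {c : ℝ}
    (hc : ∀ j i, ‖M j i‖ ≤ c) {t : ℝ} (ht0 : 0 ≤ t) (ht1 : t ≤ 1) {a : ι → ℂ} {g : κ → ℂ}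
    (ha : ∑ i, ‖a i‖ ^ (2 / (1 + t)) = 1) (hg : ∑ j, ‖g j‖ ^ (2 / (1 + t)) = 1) :
    ‖∑ j, g j * (M *ᵥ a) j‖ ≤ c ^ t := by
  have ht : -1 < t := by linarith
  have hp : 0 < 2 / (1 + t) := by positivity
  set F : ℂ → ℂ := fun z ↦ ∑ j, interpolant t g z j * (M *ᵥ interpolant t a z) j
  have hdiff : Differentiable ℂ F := by
    refine Differentiable.fun_sum fun j _ ↦ (differentiable_interpolant t g j).mul ?_
    simp only [mulVec, dotProduct]
    exact Differentiable.fun_sum fun i _ ↦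
      (differentiable_const _).mul (differentiable_interpolant t a i)
  have hbdd : BddAbove ((norm ∘ F) '' verticalClosedStrip 0 1) := by
    refine ⟨max c 0 * Fintype.card κ * Fintype.card ι, ?_⟩
    rintro _ ⟨z, hz, rfl⟩
    calc ‖F z‖ ≤ c * (∑ j, ‖interpolant t g z j‖) * ∑ i, ‖interpolant t a z i‖ :=
          norm_sum_mul_mulVec_le_mul_sum_mul_sum hc _ _
      _ ≤ max c 0 * Fintype.card κ * Fintype.card ι := by
          gcongr
          · exact le_max_left c 0
          · exact sum_norm_interpolant_le_card ht (norm_le_one_of_sum_rpow_eq_one hp hg) hz.1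
          · exact sum_norm_interpolant_le_card ht (norm_le_one_of_sum_rpow_eq_one hp ha) hz.1
  have h0 : ∀ z ∈ Complex.re ⁻¹' {0}, ‖F z‖ ≤ 1 := by
    intro z hz
    refine (norm_sum_mul_mulVec_le_sqrt_mul_sqrt hM _ _).trans_eq ?_
    rw [sum_norm_interpolant_sq ht _ hz, sum_norm_interpolant_sq ht _ hz, ha, hg,
      Real.sqrt_one, one_mul]
  have h1 : ∀ z ∈ Complex.re ⁻¹' {1}, ‖F z‖ ≤ c := by
    intro z hz
    refine (norm_sum_mul_mulVec_le_mul_sum_mul_sum hc _ _).trans_eq ?_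
    rw [sum_norm_interpolant ht _ hz, sum_norm_interpolant ht _ hz, ha, hg, mul_one, mul_one]
  have := norm_le_interp_of_mem_verticalClosedStrip₀₁' F (z := t) ⟨by simpa, by simpa⟩
    hdiff.diffContOnCl hbdd h0 h1
  simpa [F, interpolant_self] using this

lemma exists_sum_norm_rpow_eq_one_sum_mul_eq {p q : ℝ} (hpq : p.HolderConjugate q) {β : κ → ℂ}
    (hβ : β ≠ 0) :
    ∃ γ : κ → ℂ, ∑ j, ‖γ j‖ ^ p = 1 ∧ ∑ j, γ j * β j = ((∑ j, ‖β j‖ ^ q) ^ q⁻¹ : ℝ) := by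
  obtain ⟨j₀, hj₀⟩ := Function.ne_iff.mp hβ
  have hq := hpq.symm.pos
  set S := ∑ j, ‖β j‖ ^ q
  have hS : 0 < S := sum_pos' (fun j _ ↦ by positivity)
    ⟨j₀, mem_univ _, Real.rpow_pos_of_pos (norm_pos_iff.mpr hj₀) q⟩
  set N := S ^ q⁻¹
  have hN : 0 < N := by positivity
  set r : κ → ℝ := fun j ↦ ‖β j‖ / N
  have hr : ∑ j, r j ^ q = 1 := by
    simp only [r, Real.div_rpow (norm_nonneg _) hN.le, ← sum_div, N]
    rw [Real.rpow_inv_rpow hS.le hq.ne', div_self hS.ne']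
  refine ⟨fun j ↦ starRingEnd ℂ (β j) / ‖β j‖ * (r j ^ (q - 1) : ℝ), ?_, ?_⟩
  · refine (sum_congr rfl fun j _ ↦ ?_).trans hr
    rcases eq_or_ne (β j) 0 with h | h
    · simp [r, h, Real.zero_rpow hq.ne', Real.zero_rpow hpq.symm.sub_one_pos.ne',
        Real.zero_rpow hpq.pos.ne']
    · rw [norm_mul, norm_div, RCLike.norm_conj, Complex.norm_real, norm_norm,
        div_self (norm_ne_zero_iff.mpr h), one_mul, Complex.norm_real,
        Real.norm_of_nonneg (by positivity), ← Real.rpow_mul (by positivity),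
        hpq.symm.sub_one_mul_conj]
  · have hterm (j : κ) : starRingEnd ℂ (β j) / ‖β j‖ * (r j ^ (q - 1) : ℝ) * β j =
        (N * r j ^ q : ℝ) := by
      rcases eq_or_ne (β j) 0 with h | h
      · simp [r, h, Real.zero_rpow hq.ne']
      · have hr0 : 0 ≤ r j := by positivity
        rw [mul_right_comm, div_mul_eq_mul_div, mul_comm (starRingEnd ℂ _), Complex.mul_conj',
          sq, mul_div_assoc, div_self (by simpa using h), mul_one, ← Complex.ofReal_mul,
          show ‖β j‖ = N * r j by simp only [r]; field_simp, mul_assoc,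
          ← Real.rpow_one_add' hr0 (by linarith), add_sub_cancel]
    rw [sum_congr rfl fun j _ ↦ hterm j, ← Complex.ofReal_sum, ← mul_sum, hr, mul_one]

lemma rpow_sum_norm_smul {s : ℝ} (hs : 0 < s) (r : ℂ) (x : ι → ℂ) :
    (∑ i, ‖(r • x) i‖ ^ s) ^ s⁻¹ = ‖r‖ * (∑ i, ‖x i‖ ^ s) ^ s⁻¹ := by
  simp only [Pi.smul_apply, smul_eq_mul, norm_mul, Real.mul_rpow (norm_nonneg _) (norm_nonneg _),
    ← mul_sum]
  rw [Real.mul_rpow (by positivity) (by positivity), Real.rpow_rpow_inv (norm_nonneg _) hs.ne']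

lemma holderConjugate_two_div {t : ℝ} (ht0 : -1 < t) (ht1 : t < 1) :
    (2 / (1 + t)).HolderConjugate (2 / (1 - t)) where
  inv_add_inv_eq_inv := by rw [inv_div, inv_div, inv_one]; ring
  left_pos := div_pos two_pos (by linarith)
  right_pos := div_pos two_pos (by linarith)

theorem rpow_sum_norm_mulVec_le_of_sum_eq_one [DecidableEq ι] {M : Matrix κ ι ℂ}
    (hM : Mᴴ * M = 1) {c : ℝ} (hc0 : 0 ≤ c) (hc : ∀ j i, ‖M j i‖ ≤ c) {t : ℝ} (ht0 : 0 ≤ t)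
    (ht1 : t < 1) {a : ι → ℂ} (ha : ∑ i, ‖a i‖ ^ (2 / (1 + t)) = 1) :
    (∑ j, ‖(M *ᵥ a) j‖ ^ (2 / (1 - t))) ^ ((1 - t) / 2) ≤ c ^ t := by
  rcases eq_or_ne (M *ᵥ a) 0 with h | h
  · simp [h, Real.zero_rpow (div_pos two_pos (sub_pos.mpr ht1)).ne',
      Real.zero_rpow (div_pos (sub_pos.mpr ht1) two_pos).ne', Real.rpow_nonneg hc0]
  · obtain ⟨γ, hγ, hsum⟩ := exists_sum_norm_rpow_eq_one_sum_mul_eq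
      (holderConjugate_two_div (by linarith) ht1) h
    have := norm_sum_mul_mulVec_le_rpow hM hc ht0 ht1.le ha hγ
    rwa [hsum, Complex.norm_real, Real.norm_of_nonneg (by positivity), inv_div] at this

theorem rpow_sum_norm_mulVec_le [DecidableEq ι] {M : Matrix κ ι ℂ} (hM : Mᴴ * M = 1) {c : ℝ}
    (hc0 : 0 ≤ c) (hc : ∀ j i, ‖M j i‖ ≤ c) {t : ℝ} (ht0 : 0 ≤ t) (ht1 : t < 1) (a : ι → ℂ) :
    (∑ j, ‖(M *ᵥ a) j‖ ^ (2 / (1 - t))) ^ ((1 - t) / 2) ≤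
      c ^ t * (∑ i, ‖a i‖ ^ (2 / (1 + t))) ^ ((1 + t) / 2) := by
  have hp : 0 < 2 / (1 + t) := div_pos two_pos (by linarith)
  have hq : 0 < 2 / (1 - t) := div_pos two_pos (by linarith)
  rcases eq_or_ne a 0 with rfl | ha
  · simp [Real.zero_rpow hp.ne', Real.zero_rpow hq.ne',
      Real.zero_rpow (by linarith : (1 - t) / 2 ≠ 0),
      Real.zero_rpow (by linarith : (1 + t) / 2 ≠ 0)]
  obtain ⟨i₀, hi₀⟩ := Function.ne_iff.mp ha
  set S := ∑ i, ‖a i‖ ^ (2 / (1 + t))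
  have hS : 0 < S := sum_pos' (fun i _ ↦ by positivity)
    ⟨i₀, mem_univ _, Real.rpow_pos_of_pos (norm_pos_iff.mpr hi₀) _⟩
  set A := S ^ ((1 + t) / 2)
  have hA : 0 < A := by positivity
  have hnorm : ∑ i, ‖((A⁻¹ : ℂ) • a) i‖ ^ (2 / (1 + t)) = 1 := by
    have h := rpow_sum_norm_smul hp (A⁻¹ : ℂ) a
    rw [inv_div, norm_inv, Complex.norm_real, Real.norm_of_nonneg hA.le,
      inv_mul_cancel₀ hA.ne'] at h
    calc _ = (_ ^ (2 / (1 + t))⁻¹) ^ (2 / (1 + t)) :=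
          (Real.rpow_inv_rpow (sum_nonneg fun i _ ↦ by positivity) hp.ne').symm
      _ = 1 := by rw [inv_div, h, Real.one_rpow]
  have := rpow_sum_norm_mulVec_le_of_sum_eq_one hM hc0 hc ht0 ht1 hnorm
  rw [mulVec_smul, show (1 - t) / 2 = (2 / (1 - t))⁻¹ from (inv_div _ _).symm,
    rpow_sum_norm_smul hq, norm_inv, Complex.norm_real, Real.norm_of_nonneg hA.le,
    inv_mul_le_iff₀ hA, mul_comm, inv_div] at this
  exact this

lemma HasDerivAt.nonneg_of_forall_Ioo_le {f : ℝ → ℝ} {f' a b : ℝ} (hf : HasDerivAt f f' a)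
    (hab : a < b) (h : ∀ x ∈ Set.Ioo a b, f a ≤ f x) : 0 ≤ f' := by
  have hslope := (hasDerivWithinAt_iff_tendsto_slope' (s := Set.Ioi a) (lt_irrefl a)).mp
    (hf.hasDerivWithinAt (s := Set.Ioi a))
  refine ge_of_tendsto hslope ?_
  filter_upwards [Ioo_mem_nhdsGT hab] with x hx
  rw [slope_def_field]
  exact div_nonneg (sub_nonneg.mpr (h x hx)) (sub_pos.mpr hx.1).le

lemma hasDerivAt_rpow_inv_one_add_mul {x : ℝ} (hx : 0 ≤ x) (k : ℝ) :
    HasDerivAt (fun s : ℝ ↦ x ^ (1 + k * s)⁻¹) (k * Real.negMulLog x) 0 := by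
  rcases hx.eq_or_lt with rfl | hx
  · have hne : ∀ᶠ s in nhds (0 : ℝ), 1 + k * s ≠ 0 :=
      (continuous_const.add (continuous_const.mul continuous_id)).continuousAt.eventually_ne
        (by simp)
    refine (hasDerivAt_const (0 : ℝ) (0 : ℝ)).congr_of_eventuallyEq ?_ |>.congr_deriv (by simp)
    filter_upwards [hne] with s hs
    exact Real.zero_rpow (inv_ne_zero hs)
  · have hinv : HasDerivAt (fun s : ℝ ↦ (1 + k * s)⁻¹) (-k) 0 := by
      simpa using (((hasDerivAt_id (0 : ℝ)).const_mul k).const_add 1).fun_inv (by simp)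
    exact ((Real.hasStrictDerivAt_const_rpow hx _).hasDerivAt.comp 0 hinv).congr_deriv
      (by simp [Real.negMulLog]; ring)

lemma hasDerivAt_log_sum_rpow {p : ι → ℝ} (hp0 : ∀ i, 0 ≤ p i) (hp1 : ∑ i, p i = 1) (k : ℝ) :
    HasDerivAt (fun s ↦ Real.log (∑ i, p i ^ (1 + k * s)⁻¹))
      (k * ∑ i, Real.negMulLog (p i)) 0 := by
  have hsum :=
    HasDerivAt.fun_sum fun i (_ : i ∈ univ) ↦ hasDerivAt_rpow_inv_one_add_mul (hp0 i) k
  have h0 : ∑ i, p i ^ (1 + k * 0)⁻¹ = 1 := by simpa using hp1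
  simpa [h0, hp1, mul_sum] using hsum.log (by rw [h0]; exact one_ne_zero)

lemma sum_rpow_pos_of_sum_eq_one {p : ι → ℝ} (hp0 : ∀ i, 0 ≤ p i) (hp1 : ∑ i, p i = 1)
    (e : ℝ) : 0 < ∑ i, p i ^ e := by
  obtain ⟨i, -, hi⟩ := exists_ne_zero_of_sum_ne_zero (hp1.trans_ne one_ne_zero)
  exact sum_pos' (fun j _ ↦ Real.rpow_nonneg (hp0 j) e)
    ⟨i, mem_univ _, Real.rpow_pos_of_pos ((hp0 i).lt_of_ne' hi) e⟩

lemma rpow_two_div_eq_sq_rpow_inv {x : ℝ} (hx : 0 ≤ x) (r : ℝ) :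
    x ^ (2 / r) = (x ^ 2) ^ r⁻¹ := by
  rw [← Real.rpow_natCast, ← Real.rpow_mul hx, div_eq_mul_inv, Nat.cast_ofNat]

theorem log_sum_rpow_mulVec_le [DecidableEq ι] {M : Matrix κ ι ℂ} (hM : Mᴴ * M = 1) {c : ℝ}
    (hc0 : 0 < c) (hc : ∀ j i, ‖M j i‖ ≤ c) {α : ι → ℂ} (hα : ∑ i, ‖α i‖ ^ 2 = 1) {t : ℝ}
    (ht0 : 0 ≤ t) (ht1 : t < 1) :
    (1 - t) / 2 * Real.log (∑ j, (‖(M *ᵥ α) j‖ ^ 2) ^ (1 - t)⁻¹) ≤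
      t * Real.log c + (1 + t) / 2 * Real.log (∑ i, (‖α i‖ ^ 2) ^ (1 + t)⁻¹) := by
  have hP := sum_rpow_pos_of_sum_eq_one (fun i ↦ sq_nonneg ‖α i‖) hα (1 + t)⁻¹
  have hQ := sum_rpow_pos_of_sum_eq_one (fun j ↦ sq_nonneg ‖(M *ᵥ α) j‖)
    ((sum_norm_sq_mulVec hM α).trans hα) (1 - t)⁻¹
  have h := rpow_sum_norm_mulVec_le hM hc0.le hc ht0 ht1 α
  simp only [rpow_two_div_eq_sq_rpow_inv (norm_nonneg _)] at h
  have := Real.log_le_log (by positivity) h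
  rwa [Real.log_mul (by positivity) (by positivity), Real.log_rpow hQ, Real.log_rpow hP,
    Real.log_rpow hc0] at this

theorem neg_two_mul_log_le_sum_negMulLog [DecidableEq ι] {M : Matrix κ ι ℂ} (hM : Mᴴ * M = 1)
    {c : ℝ} (hc0 : 0 < c) (hc : ∀ j i, ‖M j i‖ ≤ c) {α : ι → ℂ} (hα : ∑ i, ‖α i‖ ^ 2 = 1) :
    -(2 * Real.log c) ≤
      ∑ i, Real.negMulLog (‖α i‖ ^ 2) + ∑ j, Real.negMulLog (‖(M *ᵥ α) j‖ ^ 2) := by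
  have hMα : ∑ j, ‖(M *ᵥ α) j‖ ^ 2 = 1 := (sum_norm_sq_mulVec hM α).trans hα
  set Φ : ℝ → ℝ := fun s ↦ s * Real.log c
    + (1 + s) / 2 * Real.log (∑ i, (‖α i‖ ^ 2) ^ (1 + 1 * s)⁻¹)
    - (1 - s) / 2 * Real.log (∑ j, (‖(M *ᵥ α) j‖ ^ 2) ^ (1 + -1 * s)⁻¹)
  have hΦ : HasDerivAt Φ (Real.log c + (∑ i, Real.negMulLog (‖α i‖ ^ 2)) / 2
      + (∑ j, Real.negMulLog (‖(M *ᵥ α) j‖ ^ 2)) / 2) 0 := by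
    have hP := hasDerivAt_log_sum_rpow (fun i ↦ sq_nonneg ‖α i‖) hα 1
    have hQ := hasDerivAt_log_sum_rpow (fun j ↦ sq_nonneg ‖(M *ᵥ α) j‖) hMα (-1)
    have := (((hasDerivAt_id (0 : ℝ)).mul_const (Real.log c)).add
      ((((hasDerivAt_id (0 : ℝ)).const_add 1).div_const 2).mul hP)).sub
      ((((hasDerivAt_id (0 : ℝ)).const_sub 1).div_const 2).mul hQ)
    refine this.congr_deriv ?_
    simp [hα, hMα]
    ring
  have hΦ0 : Φ 0 = 0 := by simp [Φ, hα, hMα]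
  have hΦpos : ∀ s ∈ Set.Ioo (0 : ℝ) 1, Φ 0 ≤ Φ s := by
    rintro s ⟨hs0, hs1⟩
    have := log_sum_rpow_mulVec_le hM hc0 hc hα hs0.le hs1
    rw [hΦ0]
    simp only [Φ, one_mul, neg_one_mul, ← sub_eq_add_neg]
    linarith
  linarith [hΦ.nonneg_of_forall_Ioo_le one_pos hΦpos]

end

theorem OrthonormalBasis.neg_log_iSup_le_sum_negMulLog {E ι κ : Type*} [NormedAddCommGroup E]
    [InnerProductSpace ℂ E] [Fintype ι] [Fintype κ] (e : OrthonormalBasis κ ℂ E)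
    (f : OrthonormalBasis ι ℂ E) {x : E} (hx : ‖x‖ = 1) :
    -Real.log (⨆ i, ⨆ j, ‖⟪e i, f j⟫‖ ^ 2) ≤
      ∑ i, Real.negMulLog (‖⟪e i, x⟫‖ ^ 2) + ∑ j, Real.negMulLog (‖⟪f j, x⟫‖ ^ 2) := by
  classical
  set T := e.toBasis.toMatrix f
  have hT (i : κ) (j : ι) : T i j = ⟪e i, f j⟫ := by
    simp [T, Module.Basis.toMatrix_apply, OrthonormalBasis.repr_apply_apply]
  have hTα : T *ᵥ (fun j ↦ ⟪f j, x⟫) = fun i ↦ ⟪e i, x⟫ := by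
    ext i
    simpa [mulVec, dotProduct, OrthonormalBasis.repr_apply_apply] using
      congrFun (Module.Basis.toMatrix_mulVec_repr f.toBasis e.toBasis x) i
  have hα : ∑ j, ‖⟪f j, x⟫‖ ^ 2 = 1 := by rw [f.sum_sq_norm_inner_right, hx, one_pow]
  set s := ⨆ i, ⨆ j, ‖⟪e i, f j⟫‖ ^ 2
  have hle (i : κ) (j : ι) : ‖T i j‖ ^ 2 ≤ s := by
    rw [hT]
    exact (le_ciSup (Set.finite_range _).bddAbove j).trans
      (le_ciSup (f := fun i ↦ ⨆ j, ‖⟪e i, f j⟫‖ ^ 2) (Set.finite_range _).bddAbove i)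
  obtain ⟨i, j, hij⟩ : ∃ i j, T i j ≠ 0 := by
    by_contra! h
    have hT0 : T = 0 := Matrix.ext h
    have := e.sum_sq_norm_inner_right x
    simp_rw [← congrFun hTα, hT0, Matrix.zero_mulVec] at this
    simp [hx] at this
  have hs : 0 < s := (by positivity : 0 < ‖T i j‖ ^ 2).trans_le (hle i j)
  have hc (i : κ) (j : ι) : ‖T i j‖ ≤ √s := (Real.le_sqrt (norm_nonneg _) hs.le).mpr (hle i j)
  have := neg_two_mul_log_le_sum_negMulLog
    (e.toMatrix_orthonormalBasis_conjTranspose_mul_self f) (Real.sqrt_pos.mpr hs) hc hα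
  rw [Real.log_sqrt hs.le, hTα] at this
  linarith

theorem stmt_0_general {d : ℕ}
    (V W : Matrix (Fin d) (Fin d) ℂ)
    (hV : V ∈ Matrix.unitaryGroup (Fin d) ℂ)
    (hW : W ∈ Matrix.unitaryGroup (Fin d) ℂ)
    (χ : OrthonormalBasis (Fin d) ℂ (EuclideanSpace ℂ (Fin d)))
    (ψ : EuclideanSpace ℂ (Fin d)) (hψ : ‖ψ‖ = 1) :
    tEnt χ V ψ + tEnt χ W ψ ≥
      - Real.log (⨆ i : Fin d, ⨆ j : Fin d, ‖⟪χ i, act (W * Vᴴ) (χ j)⟫‖ ^ 2) := by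
  set ρ := toEuclideanCLM (n := Fin d) (𝕜 := ℂ)
  have hact (A : Matrix (Fin d) (Fin d) ℂ) (x : EuclideanSpace ℂ (Fin d)) : act A x = ρ A x := rfl
  have hunit {A : Matrix (Fin d) (Fin d) ℂ} (hA : A ∈ unitaryGroup (Fin d) ℂ) :
      ρ A ∈ unitary _ :=
    Unitary.map_mem ρ hA
  set L := Unitary.linearIsometryEquiv ⟨ρ (W * Vᴴ), hunit (mul_mem hW (Unitary.star_mem hV))⟩
  have hL (x : EuclideanSpace ℂ (Fin d)) : L x = act (W * Vᴴ) x := rfl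
  have hLV : act (W * Vᴴ) (act V ψ) = act W ψ := by
    rw [hact, hact, hact, ← mul_apply_eq_comp, ← map_mul, mul_assoc, ← star_eq_conjTranspose,
      Unitary.star_mul_self_of_mem hV, mul_one]
  have hWψ : ‖act W ψ‖ = 1 := (Unitary.norm_map ⟨ρ W, hunit hW⟩ ψ).trans hψ
  have hinner (j : Fin d) : ⟪act (W * Vᴴ) (χ j), act W ψ⟫ = ⟪χ j, act V ψ⟫ := by
    rw [← hLV]
    exact L.inner_map_map _ _
  have := χ.neg_log_iSup_le_sum_negMulLog (χ.map L) hWψ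
  simp only [OrthonormalBasis.map_apply, hL, hinner] at this
  rw [ge_iff_le, add_comm]
  exact this

theorem stmt_0 {d : ℕ} (hd : 1 ≤ d)
    (V W : Matrix (Fin d) (Fin d) ℂ)
    (hV : V ∈ Matrix.unitaryGroup (Fin d) ℂ)
    (hW : W ∈ Matrix.unitaryGroup (Fin d) ℂ)
    (χ : OrthonormalBasis (Fin d) ℂ (EuclideanSpace ℂ (Fin d)))
    (ψ : EuclideanSpace ℂ (Fin d)) (hψ : ‖ψ‖ = 1) :
    tEnt χ V ψ + tEnt χ W ψ ≥
      - Real.log (⨆ i : Fin d, ⨆ j : Fin d, ‖⟪χ i, act (W * Vᴴ) (χ j)⟫‖ ^ 2) :=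
  stmt_0_general V W hV hW χ ψ hψ

end
end

section
/- Let d ≥ 1, let V and W be unitary operators on ℂ^d, and let {χ_i}_{i=0}^{d-1} be an orthonormal basis of ℂ^d such that |⟨χ_i, W V* χ_j⟩| < 1 for all indices i, j. Then for every unit vector ψ ∈ ℂ^d the sum of the tester entropies is strictly positive: H(V) + H(W) > 0. (That is, if the unitaries V and W are not perfectly aligned with respect to the measurement basis, the rotated measurements {V*|χ_i⟩⟨χ_i|V} and {W*|χ_i⟩⟨χ_i|W} are incompatible.) -/
open scoped ComplexInnerProductSpace Matrix

noncomputable section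

lemma act_mul {d : ℕ} (A B : Matrix (Fin d) (Fin d) ℂ) (ψ : EuclideanSpace ℂ (Fin d)) :
    act (A * B) ψ = act A (act B ψ) := by
  simp [act, Matrix.toEuclideanLin_apply, Matrix.mulVec_mulVec]

lemma act_one {d : ℕ} (ψ : EuclideanSpace ℂ (Fin d)) : act 1 ψ = ψ := by
  ext x
  simp [act, Matrix.toEuclideanLin_apply, Matrix.one_mulVec]

lemma act_smul {d : ℕ} (A : Matrix (Fin d) (Fin d) ℂ) (c : ℂ) (ψ : EuclideanSpace ℂ (Fin d)) :
    act A (c • ψ) = c • act A ψ := by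
  simp [act]

lemma parseval {d : ℕ} (χ : OrthonormalBasis (Fin d) ℂ (EuclideanSpace ℂ (Fin d)))
    (x : EuclideanSpace ℂ (Fin d)) :
    ∑ i, (‖⟪χ i, x⟫‖ : ℝ) ^ 2 = ‖x‖ ^ 2 := by
  have h := χ.sum_inner_mul_inner x x
  have h2 : ∀ i : Fin d, ⟪x, χ i⟫ * ⟪χ i, x⟫ = ((‖⟪χ i, x⟫‖ : ℝ) ^ 2 : ℂ) := by
    intro i
    rw [← inner_conj_symm (χ i) x, Complex.mul_conj', RCLike.norm_conj]
  rw [Finset.sum_congr rfl (fun i _ => h2 i)] at h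
  have h3 := congrArg Complex.re h
  rw [Complex.re_sum] at h3
  simp only [← Complex.ofReal_pow, Complex.ofReal_re] at h3
  rw [h3]; exact inner_self_eq_norm_sq (𝕜 := ℂ) x

/-- If the probability distribution of `U ψ` has zero entropy and `‖act U ψ‖ = 1`,
then `act U ψ = a • χ i` for some `i` and unit scalar `a`. -/
lemma collapse {d : ℕ} (χ : OrthonormalBasis (Fin d) ℂ (EuclideanSpace ℂ (Fin d)))
    (v : EuclideanSpace ℂ (Fin d)) (hv : ‖v‖ = 1)
    (hz : ∀ i : Fin d, Real.negMulLog (‖⟪χ i, v⟫‖ ^ 2) = 0) :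
    ∃ (i : Fin d) (a : ℂ), ‖a‖ = 1 ∧ v = a • χ i := by
  have hsum : ∑ i, (‖⟪χ i, v⟫‖ : ℝ) ^ 2 = 1 := by rw [parseval, hv]; norm_num
  have hzero_or_one : ∀ i : Fin d, ‖⟪χ i, v⟫‖ ^ 2 = 0 ∨ ‖⟪χ i, v⟫‖ ^ 2 = 1 := by
    intro i
    have h := hz i
    rcases eq_or_ne (‖⟪χ i, v⟫‖ ^ 2) 0 with h0 | h0
    · exact Or.inl h0
    · right
      have hpos : 0 < ‖⟪χ i, v⟫‖ ^ 2 := lt_of_le_of_ne (by positivity) (Ne.symm h0)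
      have := Real.log_eq_zero.mp (by
        have : -(‖⟪χ i, v⟫‖ ^ 2) * Real.log (‖⟪χ i, v⟫‖ ^ 2) = 0 := h
        rcases mul_eq_zero.mp this with h1 | h1
        · exact absurd (neg_eq_zero.mp h1) h0
        · exact h1)
      rcases this with h1 | h1 | h1
      · exact absurd h1 h0
      · exact h1
      · linarith
  -- some i has probability 1
  have hex : ∃ i : Fin d, ‖⟪χ i, v⟫‖ ^ 2 = 1 := by
    by_contra hc
    push_neg at hc
    have : ∑ i, (‖⟪χ i, v⟫‖ : ℝ) ^ 2 = 0 := by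
      apply Finset.sum_eq_zero
      intro i _
      rcases hzero_or_one i with h | h
      · exact h
      · exact absurd h (hc i)
    rw [hsum] at this; norm_num at this
  obtain ⟨i, hi⟩ := hex
  refine ⟨i, ⟪χ i, v⟫, ?_, ?_⟩
  · nlinarith [norm_nonneg (⟪χ i, v⟫ : ℂ)]
  · -- other coefficients vanish
    have hothers : ∀ k : Fin d, k ≠ i → ⟪χ k, v⟫ = 0 := by
      intro k hk
      by_contra hne
      have hkn : ‖⟪χ k, v⟫‖ ≠ 0 := norm_ne_zero_iff.mpr hne
      have hkpos : 0 < ‖⟪χ k, v⟫‖ ^ 2 := by positivity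
      have hle : ‖⟪χ i, v⟫‖ ^ 2 + ‖⟪χ k, v⟫‖ ^ 2 ≤ ∑ j, (‖⟪χ j, v⟫‖ : ℝ) ^ 2 := by
        have := Finset.add_sum_erase Finset.univ (fun j => (‖⟪χ j, v⟫‖ : ℝ) ^ 2)
          (Finset.mem_univ i)
        rw [← this]
        gcongr
        have hk' : k ∈ Finset.univ.erase i := Finset.mem_erase.mpr ⟨hk, Finset.mem_univ k⟩
        exact Finset.single_le_sum (f := fun j => (‖⟪χ j, v⟫‖ : ℝ) ^ 2)
          (fun j _ => by positivity) hk'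
      rw [hsum, hi] at hle
      linarith
    have hrepr := χ.sum_repr' v
    rw [Finset.sum_eq_single i (fun k _ hk => by rw [hothers k hk, zero_smul])
      (fun h => absurd (Finset.mem_univ i) h)] at hrepr
    exact hrepr.symm

theorem stmt_1 {d : ℕ} (hd : 1 ≤ d)
    (V W : Matrix (Fin d) (Fin d) ℂ)
    (hV : V ∈ Matrix.unitaryGroup (Fin d) ℂ)
    (hW : W ∈ Matrix.unitaryGroup (Fin d) ℂ)
    (χ : OrthonormalBasis (Fin d) ℂ (EuclideanSpace ℂ (Fin d)))
    (hless : ∀ i j : Fin d, ‖⟪χ i, act (W * Vᴴ) (χ j)⟫‖ < 1) :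
    ∀ ψ : EuclideanSpace ℂ (Fin d), ‖ψ‖ = 1 →
      0 < tEnt χ V ψ + tEnt χ W ψ := by
  intro ψ hψ
  -- norms preserved
  have hnorm : ∀ U : Matrix (Fin d) (Fin d) ℂ, U ∈ Matrix.unitaryGroup (Fin d) ℂ →
      ‖act U ψ‖ = 1 := by
    intro U hU
    have hstar : Uᴴ * U = 1 := by
      have := hU.1
      simpa [Matrix.star_eq_conjTranspose] using this
    have h1 : ⟪act U ψ, act U ψ⟫ = ⟪ψ, ψ⟫ := by
      have : ⟪act Uᴴ (act U ψ), ψ⟫ = ⟪act U ψ, act U ψ⟫ := by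
        simp only [act, Matrix.toEuclideanLin_conjTranspose_eq_adjoint]
        exact LinearMap.adjoint_inner_left _ _ _
      rw [← this, ← act_mul, hstar, act_one]
    have h2 : (‖act U ψ‖ : ℝ) ^ 2 = ‖ψ‖ ^ 2 := by
      have e1 : RCLike.re ⟪act U ψ, act U ψ⟫ = ‖act U ψ‖ ^ 2 := inner_self_eq_norm_sq (𝕜 := ℂ) _
      have e2 : RCLike.re ⟪ψ, ψ⟫ = ‖ψ‖ ^ 2 := inner_self_eq_norm_sq (𝕜 := ℂ) _
      rw [← e1, ← e2, h1]
    nlinarith [norm_nonneg (act U ψ), norm_nonneg ψ]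
  -- probabilities are in [0,1]
  have hterm : ∀ (U : Matrix (Fin d) (Fin d) ℂ), U ∈ Matrix.unitaryGroup (Fin d) ℂ →
      ∀ i : Fin d, 0 ≤ Real.negMulLog (‖⟪χ i, act U ψ⟫‖ ^ 2) := by
    intro U hU i
    apply Real.negMulLog_nonneg (by positivity)
    have hsum : ∑ j, (‖⟪χ j, act U ψ⟫‖ : ℝ) ^ 2 = 1 := by
      rw [parseval, hnorm U hU]; norm_num
    calc ‖⟪χ i, act U ψ⟫‖ ^ 2 ≤ ∑ j, (‖⟪χ j, act U ψ⟫‖ : ℝ) ^ 2 :=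
          Finset.single_le_sum (f := fun j => (‖⟪χ j, act U ψ⟫‖ : ℝ) ^ 2)
            (fun j _ => by positivity) (Finset.mem_univ i)
      _ = 1 := hsum
  have hV0 : 0 ≤ tEnt χ V ψ := Finset.sum_nonneg fun i _ => hterm V hV i
  have hW0 : 0 ≤ tEnt χ W ψ := Finset.sum_nonneg fun i _ => hterm W hW i
  rcases lt_or_eq_of_le (by linarith : (0:ℝ) ≤ tEnt χ V ψ + tEnt χ W ψ) with h | h
  · exact h
  exfalso
  have hVz : tEnt χ V ψ = 0 := by linarith
  have hWz : tEnt χ W ψ = 0 := by linarith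
  have hVterms : ∀ i : Fin d, Real.negMulLog (‖⟪χ i, act V ψ⟫‖ ^ 2) = 0 := by
    intro i
    have := (Finset.sum_eq_zero_iff_of_nonneg (fun i _ => hterm V hV i)).mp hVz
    exact this i (Finset.mem_univ i)
  have hWterms : ∀ i : Fin d, Real.negMulLog (‖⟪χ i, act W ψ⟫‖ ^ 2) = 0 := by
    intro i
    have := (Finset.sum_eq_zero_iff_of_nonneg (fun i _ => hterm W hW i)).mp hWz
    exact this i (Finset.mem_univ i)
  obtain ⟨i, a, ha, hVi⟩ := collapse χ (act V ψ) (hnorm V hV) hVterms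
  obtain ⟨j, b, hb, hWj⟩ := collapse χ (act W ψ) (hnorm W hW) hWterms
  have ha0 : a ≠ 0 := by intro h; rw [h] at ha; simp at ha
  -- χ i = a⁻¹ • act V ψ
  have hchi : χ i = a⁻¹ • act V ψ := by
    rw [hVi, smul_smul, inv_mul_cancel₀ ha0, one_smul]
  have hVstar : Vᴴ * V = 1 := by
    have := hV.1
    simpa [Matrix.star_eq_conjTranspose] using this
  have hps : act Vᴴ (act V ψ) = ψ := by rw [← act_mul, hVstar, act_one]
  have key : act (W * Vᴴ) (χ i) = (a⁻¹ * b) • χ j := by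
    rw [hchi, act_smul, act_mul, hps, hWj, smul_smul]
  have : ‖⟪χ j, act (W * Vᴴ) (χ i)⟫‖ = 1 := by
    rw [key, inner_smul_right]
    have : ⟪χ j, χ j⟫ = (1 : ℂ) := by
      rw [inner_self_eq_norm_sq_to_K (𝕜 := ℂ), χ.orthonormal.1 j]
      norm_num
    rw [this, mul_one, norm_mul, norm_inv, ha, hb]
    norm_num
  linarith [hless j i]

end
end

section
/- Let d ≥ 1 and let V and W be unitary operators on ℂ^d that are orthogonal in the Hilbert–Schmidt inner product, i.e., Tr(V* W) = 0. Then V and W are perfectly distinguishable: there exists a unit vector φ ∈ ℂ^d with ⟨Vφ, Wφ⟩ = 0. (Equivalently: every unitary operator U on ℂ^d with Tr U = 0 has 0 in its numerical range.) -/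
open scoped ComplexInnerProductSpace Matrix

noncomputable section

open Module Submodule in
lemma unitary_eigenbasis : ∀ (n : ℕ) (E : Type) [NormedAddCommGroup E]
    [InnerProductSpace ℂ E] [FiniteDimensional ℂ E],
    Module.finrank ℂ E = n → ∀ (T : E →ₗ[ℂ] E),
    (∀ x y : E, ⟪T x, T y⟫ = ⟪x, y⟫) →
    ∃ (v : Fin n → E) (μ : Fin n → ℂ), Orthonormal ℂ v ∧ ∀ i, T (v i) = μ i • v i := by
  intro n
  induction n with
  | zero =>
    intro E _ _ _ _ T _
    exact ⟨Fin.elim0, Fin.elim0, ⟨fun i => i.elim0, fun {i} => i.elim0⟩, fun i => i.elim0⟩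
  | succ n ih =>
    intro E _ _ _ hrank T hT
    have hnt : Nontrivial E := by
      apply Module.nontrivial_of_finrank_pos (R := ℂ); omega
    obtain ⟨μ₀, hμ₀⟩ := Module.End.exists_eigenvalue (T : Module.End ℂ E)
    obtain ⟨v₀, hv₀⟩ := hμ₀.exists_hasEigenvector
    have hv₀ne : v₀ ≠ 0 := hv₀.right
    set w : E := ((‖v₀‖⁻¹ : ℝ) : ℂ) • v₀ with hwdef
    have hwne : w ≠ 0 := by
      simp [hwdef, smul_eq_zero, hv₀ne, norm_eq_zero]
    have hwnorm : ‖w‖ = 1 := by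
      rw [hwdef, norm_smul]
      simp only [Complex.norm_real, norm_inv, norm_norm]
      exact inv_mul_cancel₀ (norm_ne_zero_iff.mpr hv₀ne)
    have hTw : T w = μ₀ • w := by
      rw [hwdef, map_smul, hv₀.apply_eq_smul, smul_comm]
    have hμ₀ne : μ₀ ≠ 0 := by
      intro h
      have := hT w w
      rw [hTw, h, zero_smul, inner_zero_left] at this
      have h2 : ⟪w, w⟫ = (1 : ℂ) := by
        rw [inner_self_eq_norm_sq_to_K, hwnorm]; norm_num
      rw [h2] at this; exact one_ne_zero this.symm
    set K := (ℂ ∙ w)ᗮ with hKdef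
    have hKrank : finrank ℂ K = n := by
      have h1 := Submodule.finrank_add_finrank_orthogonal (K := ℂ ∙ w)
      rw [finrank_span_singleton hwne, hrank] at h1
      rw [hKdef]
      omega
    have hTK : ∀ x ∈ K, T x ∈ K := by
      intro x hx
      rw [hKdef, Submodule.mem_orthogonal_singleton_iff_inner_right] at hx ⊢
      have h := hT w x
      rw [hTw, inner_smul_left, hx] at h
      exact (mul_eq_zero.mp h).resolve_left (by simpa using hμ₀ne)
    set T' := T.restrict hTK with hT'def
    have hT' : ∀ x y : K, ⟪T' x, T' y⟫ = ⟪x, y⟫ := by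
      intro x y
      simp only [hT'def, Submodule.coe_inner, LinearMap.restrict_coe_apply]
      exact hT x y
    obtain ⟨v', μ', hon', heig'⟩ := ih K hKrank T' hT'
    refine ⟨Fin.cons w (fun i => (v' i : E)), Fin.cons μ₀ μ', ?_, ?_⟩
    · rw [orthonormal_iff_ite]
      intro i j
      refine Fin.cases ?_ ?_ i <;> [skip; intro i'] <;> refine Fin.cases ?_ ?_ j <;>
        try intro j'
      · simp [inner_self_eq_norm_sq_to_K, hwnorm]
      · simp only [Fin.cons_zero, Fin.cons_succ]
        rw [if_neg (by simp [Fin.ext_iff])]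
        exact Submodule.mem_orthogonal_singleton_iff_inner_right.mp (v' j').2
      · simp only [Fin.cons_zero, Fin.cons_succ]
        rw [if_neg (by simp [Fin.ext_iff]), inner_eq_zero_symm]
        exact Submodule.mem_orthogonal_singleton_iff_inner_right.mp (v' i').2
      · simp only [Fin.cons_succ]
        rw [← Submodule.coe_inner, orthonormal_iff_ite.mp hon' i' j']
        simp [Fin.ext_iff]
    · intro i
      refine Fin.cases ?_ ?_ i
      · simpa using hTw
      · intro i'
        simp only [Fin.cons_succ]
        have : T (v' i' : E) = (T' (v' i') : E) := rfl
        rw [this, heig' i']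
        simp

theorem stmt_4 {d : ℕ} (hd : 1 ≤ d)
    (V W : Matrix (Fin d) (Fin d) ℂ)
    (hV : V ∈ Matrix.unitaryGroup (Fin d) ℂ)
    (hW : W ∈ Matrix.unitaryGroup (Fin d) ℂ)
    (horth : Matrix.trace (Vᴴ * W) = 0) :
    ∃ φ : EuclideanSpace ℂ (Fin d), ‖φ‖ = 1 ∧ ⟪act V φ, act W φ⟫ = 0 := by
  classical
  set U := Vᴴ * W with hUdef
  have hU : U ∈ Matrix.unitaryGroup (Fin d) ℂ := by
    exact mul_mem (Unitary.star_mem hV) hW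
  set T := Matrix.toEuclideanLin U with hTdef
  have hcomp : ∀ (A B : Matrix (Fin d) (Fin d) ℂ) (x : EuclideanSpace ℂ (Fin d)),
      Matrix.toEuclideanLin A (Matrix.toEuclideanLin B x) =
        Matrix.toEuclideanLin (A * B) x := by
    intro A B x
    simp [Matrix.toEuclideanLin_apply, Matrix.mulVec_mulVec]
  have hUU : Uᴴ * U = 1 := by
    have := hU.1
    rwa [Matrix.star_eq_conjTranspose] at this
  have hadj : ∀ x y : EuclideanSpace ℂ (Fin d),
      ⟪Matrix.toEuclideanLin V x, Matrix.toEuclideanLin W y⟫ = ⟪x, T y⟫ := by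
    intro x y
    rw [show T y = Matrix.toEuclideanLin Vᴴ (Matrix.toEuclideanLin W y) from
        (hcomp Vᴴ W y).symm,
      Matrix.toEuclideanLin_conjTranspose_eq_adjoint, LinearMap.adjoint_inner_right]
  have hT : ∀ x y : EuclideanSpace ℂ (Fin d), ⟪T x, T y⟫ = ⟪x, y⟫ := by
    intro x y
    have h1 : Matrix.toEuclideanLin Uᴴ (T y) = y := by
      show Matrix.toEuclideanLin Uᴴ (Matrix.toEuclideanLin U y) = y
      rw [hcomp, hUU]
      simp [Matrix.toEuclideanLin_apply, Matrix.one_mulVec]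
    calc ⟪T x, T y⟫ = ⟪x, Matrix.toEuclideanLin Uᴴ (T y)⟫ := by
          rw [Matrix.toEuclideanLin_conjTranspose_eq_adjoint, LinearMap.adjoint_inner_right]
      _ = ⟪x, y⟫ := by rw [h1]
  obtain ⟨v, μ, hon, heig⟩ := unitary_eigenbasis d (EuclideanSpace ℂ (Fin d))
    (by simp) T hT
  -- the basis
  have hne : Nonempty (Fin d) := ⟨⟨0, by omega⟩⟩
  have hcard : Fintype.card (Fin d) = Module.finrank ℂ (EuclideanSpace ℂ (Fin d)) := by simp
  set b := basisOfLinearIndependentOfCardEqFinrank hon.linearIndependent hcard with hbdef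
  have hb : ∀ i, b i = v i := fun i => by
    rw [hbdef, coe_basisOfLinearIndependentOfCardEqFinrank]
  -- trace computations
  have htr1 : LinearMap.trace ℂ _ T = ∑ i, μ i := by
    rw [LinearMap.trace_eq_matrix_trace ℂ b T, Matrix.trace]
    congr 1
    funext i
    rw [Matrix.diag_apply, LinearMap.toMatrix_apply, hb, heig, ← hb, map_smul]
    simp
  have htr2 : LinearMap.trace ℂ _ T = Matrix.trace U := by
    rw [hTdef, Matrix.toEuclideanLin_eq_toLin,
      LinearMap.trace_eq_matrix_trace ℂ (PiLp.basisFun 2 ℂ (Fin d)),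
      LinearMap.toMatrix_toLin]
  have hsum : ∑ i, μ i = 0 := by
    rw [← htr1, htr2]; exact horth
  have key : ∀ f : Fin d → ℂ, ⟪∑ i, v i, ∑ j, f j • v j⟫ = ∑ i, f i := by
    intro f
    simp [inner_sum, sum_inner, inner_smul_right, orthonormal_iff_ite.mp hon]
  set c : ℂ := Complex.ofReal ((Real.sqrt d)⁻¹) with hcdef
  set S : EuclideanSpace ℂ (Fin d) := ∑ i, v i with hSdef
  have hS : ⟪S, S⟫ = (d : ℂ) := by
    have := key (fun _ => 1)
    simpa [hSdef] using this
  have hdpos : (0 : ℝ) < d := by exact_mod_cast hd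
  refine ⟨c • S, ?_, ?_⟩
  · have h2 := inner_self_eq_norm_sq_to_K (𝕜 := ℂ) S
    rw [hS] at h2
    have hre : ‖S‖ ^ 2 = (d : ℝ) := by
      simpa [← Complex.ofReal_pow] using congrArg Complex.re h2.symm
    have hnormS : ‖S‖ = Real.sqrt d := by
      rw [← hre, Real.sqrt_sq (norm_nonneg _)]
    rw [norm_smul, hnormS, hcdef]
    rw [Complex.norm_real, Real.norm_eq_abs, abs_of_nonneg (by positivity)]
    field_simp
  · show ⟪Matrix.toEuclideanLin V (c • S), Matrix.toEuclideanLin W (c • S)⟫ = 0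
    rw [hadj]
    have hTφ : T (c • S) = c • ∑ j, μ j • v j := by
      rw [map_smul, map_sum]
      congr 1
      exact Finset.sum_congr rfl fun j _ => heig j
    rw [hTφ, inner_smul_left, inner_smul_right, key, hsum]
    ring

end
end

section
/- (Proposition 2) Let d ≥ 1 and let {V_n}_{n=0}^{d-1} and {W_m}_{m=0}^{d-1} be two families of unitary operators on ℂ^d, each family pairwise Hilbert–Schmidt orthogonal with Tr(V_n* V_k) = d·δ_{nk} and Tr(W_m* W_k) = d·δ_{mk}, such that each W_m lies in the ℂ-linear span of {V_0, …, V_{d-1}} (i.e., both families are orthogonal unitary bases of a common d-dimensional subspace of operators). Suppose that for every pair (m, n) there exists an orthonormal basis {χ_i}_{i=0}^{d-1} of ℂ^d (depending on m, n) with |⟨χ_i, W_m V_n* χ_j⟩| = 1/√d for all indices i, j. Then the two bases are mutually unbiased: |Tr(W_m V_n*)| = √d for all m, n. -/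
/-!
Expanding `W m = ∑ k, c k • V k`, orthogonality of the `V k` gives `Tr (W m * (V k)ᴴ) = d c_k`
and `Tr ((W m)ᴴ * W m) = d ∑ |c_k|²`, so the `d` numbers `|Tr (W m * (V k)ᴴ)|²` sum to `d²`.
Computing each trace in the basis `χ` for which all matrix elements have modulus `1/√d` bounds
it by `d · (1/√d) = √d`, so every one of these bounds is attained.
-/

open scoped ComplexInnerProductSpace Matrix

noncomputable section

namespace Matrix

variable {ι κ 𝕜 : Type*} [Fintype ι] [RCLike 𝕜]

theorem trace_toEuclideanLin [DecidableEq ι] (M : Matrix ι ι 𝕜) :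
    LinearMap.trace 𝕜 _ (toEuclideanLin M) = M.trace := by
  rw [toEuclideanLin_eq_toLin_orthonormal, LinearMap.trace_eq_matrix_trace 𝕜
    (EuclideanSpace.basisFun ι 𝕜).toBasis, LinearMap.toMatrix_toLin]

theorem norm_trace_le_of_norm_inner_le [DecidableEq ι] (M : Matrix ι ι 𝕜)
    (χ : OrthonormalBasis ι 𝕜 (EuclideanSpace 𝕜 ι)) {ε : ℝ}
    (hχ : ∀ i, ‖inner 𝕜 (χ i) (toEuclideanLin M (χ i))‖ ≤ ε) :
    ‖M.trace‖ ≤ Fintype.card ι * ε := by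
  rw [← trace_toEuclideanLin, LinearMap.trace_eq_sum_inner _ χ]
  calc _ ≤ ∑ i, ‖inner 𝕜 (χ i) (toEuclideanLin M (χ i))‖ := norm_sum_le _ _
    _ ≤ ∑ _i : ι, ε := Finset.sum_le_sum fun i _ => hχ i
    _ = _ := by simp

/-- Parseval's identity for a Hilbert–Schmidt orthogonal family of common squared norm `r`. -/
theorem sum_norm_sq_trace_mul_conjTranspose [Fintype κ] [DecidableEq κ]
    {V : κ → Matrix ι ι 𝕜} {r : 𝕜} (hV : ∀ n k, trace ((V n)ᴴ * V k) = if n = k then r else 0)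
    {W : Matrix ι ι 𝕜} (hW : W ∈ Submodule.span 𝕜 (Set.range V)) :
    ∑ k, ‖trace (W * (V k)ᴴ)‖ ^ 2 = ‖r‖ * ‖trace (Wᴴ * W)‖ := by
  obtain ⟨c, rfl⟩ := (Submodule.mem_span_range_iff_exists_fun 𝕜).mp hW
  have hcoeff : ∀ k, trace ((∑ j, c j • V j) * (V k)ᴴ) = r * c k := by
    intro k
    rw [trace_mul_comm, Finset.mul_sum]
    simp [hV, mul_comm]
  have hgram : trace ((∑ j, c j • V j)ᴴ * ∑ j, c j • V j) = r * ∑ j, (‖c j‖ ^ 2 : ℝ) := by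
    simp only [conjTranspose_sum, conjTranspose_smul, RCLike.star_def, Finset.mul_sum,
      Finset.sum_mul, Matrix.mul_smul, smul_mul, trace_sum, trace_smul, hV, smul_eq_mul, mul_ite,
      mul_zero, Finset.sum_ite_eq', Finset.mem_univ, ↓reduceIte, map_sum, map_pow]
    refine Finset.sum_congr rfl fun j _ => ?_
    rw [← mul_assoc, RCLike.mul_conj, mul_comm]
  simp only [hcoeff, hgram, norm_mul, mul_pow, ← Finset.mul_sum]
  rw [RCLike.norm_ofReal, abs_of_nonneg (by positivity)]
  ring

end Matrix

theorem stmt_8_general {d : ℕ}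
    (V W : Fin d → Matrix (Fin d) (Fin d) ℂ)
    (hVorth : ∀ n k, Matrix.trace ((V n)ᴴ * V k) = if n = k then (d : ℂ) else 0)
    (hWorth : ∀ m k, Matrix.trace ((W m)ᴴ * W k) = if m = k then (d : ℂ) else 0)
    (hspan : ∀ m, W m ∈ Submodule.span ℂ (Set.range V))
    (hsat : ∀ m n : Fin d, ∃ χ : OrthonormalBasis (Fin d) ℂ (EuclideanSpace ℂ (Fin d)),
      ∀ i j : Fin d, ‖⟪χ i, act (W m * (V n)ᴴ) (χ j)⟫‖ = 1 / Real.sqrt d) :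
    ∀ m n : Fin d, ‖Matrix.trace (W m * (V n)ᴴ)‖ = Real.sqrt d := by
  intro m n
  have hd : (0 : ℝ) < d := by exact_mod_cast m.pos
  have hbound : ∀ k, ‖Matrix.trace (W m * (V k)ᴴ)‖ ^ 2 ≤ d := fun k => by
    obtain ⟨χ, hχ⟩ := hsat m k
    have h := Matrix.norm_trace_le_of_norm_inner_le _ χ fun i => (hχ i i).le
    rw [Fintype.card_fin, mul_one_div, Real.div_sqrt] at h
    simpa [Real.sq_sqrt hd.le] using pow_le_pow_left₀ (norm_nonneg _) h 2
  have hsum : ∑ k, ‖Matrix.trace (W m * (V k)ᴴ)‖ ^ 2 = ∑ _k : Fin d, (d : ℝ) := by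
    rw [Matrix.sum_norm_sq_trace_mul_conjTranspose hVorth (hspan m), hWorth m m, if_pos rfl]
    simp
  have hn := (Finset.sum_eq_sum_iff_of_le fun k _ => hbound k).1 hsum n (Finset.mem_univ n)
  rw [← Real.sqrt_sq (norm_nonneg _), hn]

/-- Proposition 2: two orthogonal unitary bases of a common `d`-dimensional operator
subspace, all of whose pairs saturate the maximal entropic bound for some tester,
are mutually unbiased. -/
theorem stmt_8 {d : ℕ} (hd : 1 ≤ d)
    (V W : Fin d → Matrix (Fin d) (Fin d) ℂ)
    (hVu : ∀ n, V n ∈ Matrix.unitaryGroup (Fin d) ℂ)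
    (hWu : ∀ m, W m ∈ Matrix.unitaryGroup (Fin d) ℂ)
    (hVorth : ∀ n k, Matrix.trace ((V n)ᴴ * V k) = if n = k then (d : ℂ) else 0)
    (hWorth : ∀ m k, Matrix.trace ((W m)ᴴ * W k) = if m = k then (d : ℂ) else 0)
    (hspan : ∀ m, W m ∈ Submodule.span ℂ (Set.range V))
    (hsat : ∀ m n : Fin d, ∃ χ : OrthonormalBasis (Fin d) ℂ (EuclideanSpace ℂ (Fin d)),
      ∀ i j : Fin d, ‖⟪χ i, act (W m * (V n)ᴴ) (χ j)⟫‖ = 1 / Real.sqrt d) :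
    ∀ m n : Fin d, ‖Matrix.trace (W m * (V n)ᴴ)‖ = Real.sqrt d :=
  stmt_8_general V W hVorth hWorth hspan hsat

end
end
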